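/- Let d ≥ 1, α ∈ (0, 2), and let M be a symmetric positive definite d×d real matrix. Let ((u_i, s_i))_{i∈ℕ} be an i.i.d. sequence where, for each i, u_i is an ℝ^d-valued random vector with law N(0, M), s_i is a nonnegative real random variable independent of u_i with Laplace transform E[exp(−λ s_i)] = exp(−2^{α/2} λ^{α/2}) for all λ ≥ 0 (the Laplace transform of the one-sided stable law S(α/2, 1, 2cos^{2/α}(πα/4))). Then for every x, z ∈ ℝ^d, almost surely lim_{p→∞} (1/p) Σ_{i=1}^p cos(⟨√(s_i) · u_i, x − z⟩) = exp(−‖x−z‖_M^α). -/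

import Mathlib

open MeasureTheory ProbabilityTheory Real Filter

/-- The quadratic form `x ↦ xᵀ M x` on `ℝ^d`, so that the Mahalanobis norm is
`‖x‖_M = √(quadForm M x)`. -/
noncomputable def quadForm {d : ℕ} (M : Matrix (Fin d) (Fin d) ℝ)
    (x : EuclideanSpace ℝ (Fin d)) : ℝ :=
  dotProduct (fun i => x i) (M.mulVec fun i => x i)

/-- The multivariate Gaussian `N(0, M)` on `ℝ^d`: the probability measure with density
`(2π)^{-d/2} (det M)^{-1/2} exp(-xᵀ M⁻¹ x / 2)` with respect to Lebesgue measure. -/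
noncomputable def gaussianMeasure {d : ℕ} (M : Matrix (Fin d) (Fin d) ℝ) :
    Measure (EuclideanSpace ℝ (Fin d)) :=
  volume.withDensity fun x => ENNReal.ofReal
    ((2 * Real.pi) ^ (-(d : ℝ) / 2) * M.det ^ (-(1 : ℝ) / 2) *
      Real.exp (-quadForm M⁻¹ x / 2))

open scoped NNReal ENNReal

section aux
variable {d : ℕ} {M : Matrix (Fin d) (Fin d) ℝ}
open scoped MatrixOrder

lemma continuous_quadForm (N : Matrix (Fin d) (Fin d) ℝ) :
    Continuous (quadForm N) := by
  unfold quadForm dotProduct Matrix.mulVec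
  exact continuous_finset_sum _ fun i _ =>
    ((EuclideanSpace.proj i).continuous).mul (continuous_finset_sum _ fun j _ =>
      continuous_const.mul (EuclideanSpace.proj j).continuous)

lemma quadForm_nonneg (hM : M.PosDef) (v : EuclideanSpace ℝ (Fin d)) :
    0 ≤ quadForm M v := by
  have := hM.posSemidef.dotProduct_mulVec_nonneg (fun i => v i)
  simpa [quadForm] using this

lemma gaussian_cos_integral (hM : M.PosDef) (v : EuclideanSpace ℝ (Fin d)) (t : ℝ) :
    ∫ w, Real.cos (t * (inner ℝ w v : ℝ)) ∂(gaussianMeasure M)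
      = Real.exp (-(t ^ 2 * quadForm M v) / 2) := by
  classical
  have hMdet : (0:ℝ) < M.det := hM.det_pos
  set L : Matrix (Fin d) (Fin d) ℝ := CFC.sqrt M with hLdef
  have hLL : L * L = M := CFC.sqrt_mul_sqrt_self M hM.posSemidef.nonneg
  have hLherm : L.conjTranspose = L := (Matrix.nonneg_iff_posSemidef.mp (CFC.sqrt_nonneg M)).1

  have hLsym : L.transpose = L := by
    ext i j
    have h2 := congrFun (congrFun hLherm i) j
    simpa [Matrix.conjTranspose_apply] using h2
  have hdetLL : L.det * L.det = M.det := by rw [← Matrix.det_mul, hLL]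
  have hLdet0 : L.det ≠ 0 := by
    intro h; rw [h, mul_zero] at hdetLL; exact hMdet.ne' hdetLL.symm
  have hLunit : IsUnit L.det := isUnit_iff_ne_zero.mpr hLdet0
  have habs : |L.det| = M.det ^ ((1:ℝ)/2) := by
    rw [← Real.sqrt_eq_rpow, ← hdetLL, ← sq, Real.sqrt_sq_eq_abs]
  have habspos : (0:ℝ) < |L.det| := abs_pos.mpr hLdet0
  have hML : M⁻¹ * L = L⁻¹ := by
    rw [← hLL, Matrix.mul_inv_rev, Matrix.mul_assoc, Matrix.nonsing_inv_mul L hLunit,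
      Matrix.mul_one]
  have hLML : L * (M⁻¹ * L) = 1 := by
    rw [hML, Matrix.mul_nonsing_inv L hLunit]
  -- moving `L` across a dot product
  have sub : ∀ w z : Fin d → ℝ,
      dotProduct (L.mulVec w) z = dotProduct w (L.mulVec z) := by
    intro w z
    rw [dotProduct_comm, Matrix.dotProduct_mulVec, ← Matrix.mulVec_transpose, hLsym,
      dotProduct_comm]
  -- the linear map
  set ℓ : EuclideanSpace ℝ (Fin d) →ₗ[ℝ] EuclideanSpace ℝ (Fin d) :=
    Matrix.toEuclideanLin L with hℓdef
  have hℓapp : ∀ (y : EuclideanSpace ℝ (Fin d)),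
      (fun i => ℓ y i) = L.mulVec (fun j => y j) := fun y => rfl
  have hℓdet : LinearMap.det ℓ = L.det := by
    rw [hℓdef, Matrix.toEuclideanLin_eq_toLin, LinearMap.det_toLin]
  have hℓcont : Continuous ℓ := ℓ.continuous_of_finiteDimensional
  have hinner_dot : ∀ a b : EuclideanSpace ℝ (Fin d),
      (inner ℝ a b : ℝ) = dotProduct (fun i => a i) (fun i => b i) := by
    intro a b; simp [PiLp.inner_apply, dotProduct, mul_comm]
  have key1 : ∀ y : EuclideanSpace ℝ (Fin d), quadForm M⁻¹ (ℓ y) = ‖y‖^2 := by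
    intro y
    have h1 : quadForm M⁻¹ (ℓ y)
        = dotProduct (L.mulVec fun i => y i)
            (M⁻¹.mulVec (L.mulVec fun i => y i)) := by
      simp only [quadForm, hℓapp y]
    rw [h1, sub, Matrix.mulVec_mulVec, Matrix.mulVec_mulVec, Matrix.mul_assoc, hLML, Matrix.one_mulVec,
      ← hinner_dot y y, real_inner_self_eq_norm_sq]
  have key2 : ∀ y : EuclideanSpace ℝ (Fin d), (inner ℝ (ℓ y) v : ℝ) = (inner ℝ y (ℓ v) : ℝ) := by
    intro y
    rw [hinner_dot, hinner_dot, hℓapp y, hℓapp v, sub]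
  have key3 : ‖ℓ v‖^2 = quadForm M v := by
    rw [← real_inner_self_eq_norm_sq, hinner_dot, hℓapp v, sub, Matrix.mulVec_mulVec, hLL]
    rfl
  -- density helper
  have hC : (0:ℝ) < (2 * Real.pi) ^ (-(d : ℝ) / 2) * M.det ^ (-(1:ℝ)/2) := by
    have h2pi : (0:ℝ) < 2 * Real.pi := by positivity
    exact mul_pos (Real.rpow_pos_of_pos h2pi _) (Real.rpow_pos_of_pos hMdet _)
  set C : ℝ := (2 * Real.pi) ^ (-(d : ℝ) / 2) * M.det ^ (-(1:ℝ)/2) with hCdef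
  have hρmeas : Measurable fun w : EuclideanSpace ℝ (Fin d) =>
      Real.toNNReal (C * Real.exp (-quadForm M⁻¹ w / 2)) :=
    (measurable_const.mul (((continuous_quadForm M⁻¹).neg.div_const 2).rexp.measurable)).real_toNNReal
  have stepA : ∫ w, Real.cos (t * (inner ℝ w v : ℝ)) ∂(gaussianMeasure M)
      = ∫ w, (C * Real.exp (-quadForm M⁻¹ w / 2)) * Real.cos (t * (inner ℝ w v : ℝ)) := by
    rw [gaussianMeasure]
    rw [show (fun x : EuclideanSpace ℝ (Fin d) => ENNReal.ofReal
        ((2 * Real.pi) ^ (-(d : ℝ) / 2) * M.det ^ (-(1:ℝ)/2) * Real.exp (-quadForm M⁻¹ x / 2)))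
      = fun x : EuclideanSpace ℝ (Fin d) =>
        ((Real.toNNReal (C * Real.exp (-quadForm M⁻¹ x / 2)) : ℝ≥0) : ℝ≥0∞) from rfl]
    rw [integral_withDensity_eq_integral_smul hρmeas]
    congr 1
    ext w
    rw [NNReal.smul_def, Real.coe_toNNReal _ (by positivity), smul_eq_mul]
  -- change of variables
  have CoV : ∀ f : EuclideanSpace ℝ (Fin d) → ℝ, Measurable f →
      (∫ w, f w) = |L.det| * ∫ y, f (ℓ y) := by
    intro f hf
    have h1 : Measure.map ℓ (volume) = ENNReal.ofReal |L.det|⁻¹ • volume := by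
      have h := Measure.map_linearMap_addHaar_eq_smul_addHaar
        (volume : Measure (EuclideanSpace ℝ (Fin d))) (f := ℓ) (by rw [hℓdet]; exact hLdet0)
      rwa [hℓdet, abs_inv] at h
    have h2 : (∫ y, f (ℓ y)) = ∫ w, f w ∂(Measure.map ℓ volume) :=
      (integral_map hℓcont.measurable.aemeasurable hf.aestronglyMeasurable).symm
    rw [h2, h1, integral_smul_measure, ENNReal.toReal_ofReal (by positivity), smul_eq_mul,
      ← mul_assoc, mul_inv_cancel₀ habspos.ne', one_mul]
  have hcosmeas : Measurable fun w : EuclideanSpace ℝ (Fin d) =>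
      (C * Real.exp (-quadForm M⁻¹ w / 2)) * Real.cos (t * (inner ℝ w v : ℝ)) := by
    have hin : Continuous fun w : EuclideanSpace ℝ (Fin d) => (inner ℝ w v : ℝ) :=
      continuous_id.inner continuous_const
    exact (measurable_const.mul (((continuous_quadForm M⁻¹).neg.div_const 2).rexp.measurable)).mul
      ((Real.continuous_cos.comp (continuous_const.mul hin)).measurable)
  set a : EuclideanSpace ℝ (Fin d) := ℓ v with hadef
  have stepC : ∀ y : EuclideanSpace ℝ (Fin d),
      (C * Real.exp (-quadForm M⁻¹ (ℓ y) / 2)) * Real.cos (t * (inner ℝ (ℓ y) v : ℝ))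
        = C * (Real.exp (-‖y‖^2 / 2) * Real.cos (t * (inner ℝ y a : ℝ))) := by
    intro y
    rw [key1, key2 y, mul_assoc]
  -- the complex gaussian integral
  have hbre : (0:ℝ) < (((1:ℂ)/2)).re := by norm_num
  have hint : Integrable (fun y : EuclideanSpace ℝ (Fin d) =>
      Complex.exp (-((1:ℂ)/2) * (‖y‖:ℂ)^2 + ((t:ℂ)*Complex.I) * ((inner ℝ a y : ℝ) : ℂ))) :=
    GaussianFourier.integrable_cexp_neg_mul_sq_norm_add hbre _ a
  have hre : ∀ y : EuclideanSpace ℝ (Fin d),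
      Real.exp (-‖y‖^2 / 2) * Real.cos (t * (inner ℝ y a : ℝ))
        = (Complex.exp (-((1:ℂ)/2) * (‖y‖:ℂ)^2 + ((t:ℂ)*Complex.I) * ((inner ℝ a y : ℝ) : ℂ))).re := by
    intro y
    rw [Complex.exp_re]
    have hrepart : (-((1:ℂ)/2) * (‖y‖:ℂ)^2 + ((t:ℂ)*Complex.I) * ((inner ℝ a y : ℝ) : ℂ)).re
        = -‖y‖^2 / 2 := by
      simp [Complex.add_re, Complex.mul_re, Complex.I_re, Complex.I_im,
        ← Complex.ofReal_pow, Complex.ofReal_re, Complex.ofReal_im]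
      ring
    have himpart : (-((1:ℂ)/2) * (‖y‖:ℂ)^2 + ((t:ℂ)*Complex.I) * ((inner ℝ a y : ℝ) : ℂ)).im
        = t * (inner ℝ y a : ℝ) := by
      simp [Complex.add_im, Complex.mul_im, Complex.I_re, Complex.I_im,
        ← Complex.ofReal_pow, Complex.ofReal_re, Complex.ofReal_im, real_inner_comm a y]
    rw [hrepart, himpart]
  have stepD : (∫ y, Real.exp (-‖y‖^2 / 2) * Real.cos (t * (inner ℝ y a : ℝ)))
      = (2 * Real.pi) ^ ((d:ℝ)/2) * Real.exp (-(t^2 * ‖a‖^2) / 2) := by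
    have h1 : (∫ y, Real.exp (-‖y‖^2 / 2) * Real.cos (t * (inner ℝ y a : ℝ)))
        = (∫ y, Complex.exp (-((1:ℂ)/2) * (‖y‖:ℂ)^2
            + ((t:ℂ)*Complex.I) * ((inner ℝ a y : ℝ) : ℂ))).re := by
      have h2 := integral_re hint
      simp only [RCLike.re_to_complex] at h2
      rw [← h2]
      simp_rw [hre]
    rw [h1, GaussianFourier.integral_cexp_neg_mul_sq_norm_add hbre ((t:ℂ)*Complex.I) a]
    have e1 : (Real.pi / ((1:ℂ)/2)) = ((2 * Real.pi : ℝ) : ℂ) := by push_cast; ring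
    have e2 : (((t:ℂ)*Complex.I)^2 * (‖a‖:ℂ)^2 / (4 * ((1:ℂ)/2)))
        = ((-(t^2 * ‖a‖^2) / 2 : ℝ) : ℂ) := by
      push_cast
      rw [mul_pow, Complex.I_sq]
      ring
    rw [e1, e2, finrank_euclideanSpace_fin]
    have e3 : ((d:ℂ)/2) = (((d:ℝ)/2 : ℝ) : ℂ) := by push_cast; ring
    rw [e3, ← Complex.ofReal_cpow (by positivity), ← Complex.ofReal_exp, ← Complex.ofReal_mul]
    rw [Complex.ofReal_re]
  -- assemble
  rw [stepA, CoV _ hcosmeas]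
  simp_rw [stepC]
  rw [integral_const_mul, stepD, key3]
  have c1 : M.det ^ ((1:ℝ)/2) * M.det ^ (-(1:ℝ)/2) = 1 := by
    rw [← Real.rpow_add hMdet]; norm_num
  have c2 : (2 * Real.pi) ^ (-(d:ℝ)/2) * (2 * Real.pi) ^ ((d:ℝ)/2) = 1 := by
    rw [← Real.rpow_add (by positivity), neg_div, neg_add_cancel, Real.rpow_zero]
  calc |L.det| * (C * ((2 * Real.pi) ^ ((d:ℝ)/2) * Real.exp (-(t^2 * quadForm M v) / 2)))
      = (M.det ^ ((1:ℝ)/2) * M.det ^ (-(1:ℝ)/2)) *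
        ((2 * Real.pi) ^ (-(d:ℝ)/2) * (2 * Real.pi) ^ ((d:ℝ)/2)) *
        Real.exp (-(t^2 * quadForm M v) / 2) := by rw [habs, hCdef]; ring
    _ = Real.exp (-(t^2 * quadForm M v) / 2) := by rw [c1, c2]; ring



end aux

lemma isProbabilityMeasure_gaussianMeasure {d : ℕ} {M : Matrix (Fin d) (Fin d) ℝ}
    (hM : M.PosDef) : IsProbabilityMeasure (gaussianMeasure M) := by
  constructor
  have h := gaussian_cos_integral hM 0 0
  simp only [zero_mul, Real.cos_zero, zero_pow, ne_eq, OfNat.ofNat_ne_zero,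
    not_false_eq_true, neg_zero, zero_div, Real.exp_zero, integral_const, smul_eq_mul,
    mul_one] at h
  rwa [Measure.real, ENNReal.toReal_eq_one_iff] at h

lemma expected_cos {Ω : Type*} [MeasurableSpace Ω] (P : Measure Ω) [IsProbabilityMeasure P]
    {d : ℕ} {M : Matrix (Fin d) (Fin d) ℝ} (hM : M.PosDef)
    {u : Ω → EuclideanSpace ℝ (Fin d)} {s : Ω → ℝ}
    (hu : Measurable u) (hs : Measurable s)
    (hulaw : Measure.map u P = gaussianMeasure M)
    (hs0 : ∀ᵐ ω ∂P, 0 ≤ s ω)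
    (α : ℝ) (hα : 0 < α)
    (hLaplace : ∀ l : ℝ, 0 ≤ l →
      (∫ ω, Real.exp (-l * s ω) ∂P) = Real.exp (-(2:ℝ)^(α/2) * l^(α/2)))
    (hindep : IndepFun u s P) (v : EuclideanSpace ℝ (Fin d)) :
    (∫ ω, Real.cos (Real.sqrt (s ω) * (inner ℝ (u ω) v : ℝ)) ∂P)
      = Real.exp (-(Real.sqrt (quadForm M v)) ^ α) := by
  have hq : 0 ≤ quadForm M v := quadForm_nonneg hM v
  set q : ℝ := quadForm M v with hqdef
  have hPgauss : IsProbabilityMeasure (gaussianMeasure M) :=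
    isProbabilityMeasure_gaussianMeasure hM
  have hPs : IsProbabilityMeasure (Measure.map s P) :=
    Measure.isProbabilityMeasure_map hs.aemeasurable
  set g : (EuclideanSpace ℝ (Fin d)) × ℝ → ℝ :=
    fun p => Real.cos (Real.sqrt p.2 * (inner ℝ p.1 v : ℝ)) with hgdef
  have hgcont : Continuous g :=
    Real.continuous_cos.comp ((Real.continuous_sqrt.comp continuous_snd).mul
      (continuous_fst.inner continuous_const))
  have hjoint : Measure.map (fun ω => (u ω, s ω)) P
      = (gaussianMeasure M).prod (Measure.map s P) := by
    rw [← hulaw]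
    exact (indepFun_iff_map_prod_eq_prod_map_map hu.aemeasurable hs.aemeasurable).mp hindep
  have hgint : Integrable g ((gaussianMeasure M).prod (Measure.map s P)) := by
    refine (integrable_const (1:ℝ)).mono' hgcont.measurable.aestronglyMeasurable
      (ae_of_all _ fun p => ?_)
    rw [Real.norm_eq_abs]
    exact Real.abs_cos_le_one _
  have h1 : (∫ ω, Real.cos (Real.sqrt (s ω) * (inner ℝ (u ω) v : ℝ)) ∂P)
      = ∫ p, g p ∂((gaussianMeasure M).prod (Measure.map s P)) := by
    rw [← hjoint, integral_map (hu.prodMk hs).aemeasurable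
      hgcont.measurable.aestronglyMeasurable]
  have hae : ∀ᵐ r ∂(Measure.map s P), 0 ≤ r := by
    refine (ae_map_iff hs.aemeasurable ?_).mpr hs0
    exact measurableSet_Ici
  have h2 : ∫ p, g p ∂((gaussianMeasure M).prod (Measure.map s P))
      = ∫ r, ∫ w, g (w, r) ∂(gaussianMeasure M) ∂(Measure.map s P) :=
    integral_prod_symm g hgint
  have h3 : ∫ r, (∫ w, g (w, r) ∂(gaussianMeasure M)) ∂(Measure.map s P)
      = ∫ r, Real.exp (-(q/2) * r) ∂(Measure.map s P) := by
    refine integral_congr_ae (hae.mono fun r hr => ?_)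
    have := gaussian_cos_integral hM v (Real.sqrt r)
    rw [hgdef]
    simp only
    rw [this, Real.sq_sqrt hr]
    congr 1
    ring
  have h4 : ∫ r, Real.exp (-(q/2) * r) ∂(Measure.map s P)
      = ∫ ω, Real.exp (-(q/2) * s ω) ∂P := by
    rw [integral_map hs.aemeasurable]
    exact (Real.continuous_exp.comp (continuous_const.mul continuous_id)).measurable.aestronglyMeasurable
  have h5 : (∫ ω, Real.exp (-(q/2) * s ω) ∂P)
      = Real.exp (-(2:ℝ)^(α/2) * (q/2)^(α/2)) := hLaplace (q/2) (by positivity)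
  have h6 : (2:ℝ)^(α/2) * (q/2)^(α/2) = q^(α/2) := by
    rw [← Real.mul_rpow (by norm_num) (by positivity), mul_div_cancel₀]
    norm_num
  have h7 : (Real.sqrt q) ^ α = q ^ (α/2) := by
    rw [Real.sqrt_eq_rpow, ← Real.rpow_mul hq, one_div, inv_mul_eq_div]
  rw [h1, h2, h3, h4, h5, h7]
  rw [neg_mul, h6]

/-- **RFF for the Exponential-power kernel.** For i.i.d. pairs `(u_i, s_i)` with
`u_i ~ N(0,M)` on `ℝ^d` independent of the nonnegative `s_i` whose Laplace transform is
`E[exp(-λ s_i)] = exp(-2^{α/2} λ^{α/2})` (the one-sided stable law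
`S(α/2, 1, 2cos^{2/α}(πα/4))`), the SinCos random features with weight rows
`w_i = √(s_i)·u_i` satisfy, for all `x, z ∈ ℝ^d`, almost surely
`(1/p) Σ_{i<p} cos⟨√(s_i)·u_i, x-z⟩ → exp(-‖x-z‖_M^α)`. -/
theorem rff_exponential_power_kernel
    {Ω : Type*} [MeasurableSpace Ω] (P : Measure Ω) [IsProbabilityMeasure P]
    (d : ℕ) (hd : 1 ≤ d) (α : ℝ) (hα : α ∈ Set.Ioo (0 : ℝ) 2)
    (M : Matrix (Fin d) (Fin d) ℝ) (hM : M.PosDef)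
    (u : ℕ → Ω → EuclideanSpace ℝ (Fin d)) (s : ℕ → Ω → ℝ)
    (hmeas : ∀ i, Measurable fun ω => (u i ω, s i ω))
    (hindep : iIndepFun (fun i ω => (u i ω, s i ω)) P)
    (hiid : ∀ i, Measure.map (fun ω => (u i ω, s i ω)) P =
      Measure.map (fun ω => (u 0 ω, s 0 ω)) P)
    (hulaw : ∀ i, Measure.map (u i) P = gaussianMeasure M)
    (hs0 : ∀ i, ∀ᵐ ω ∂P, 0 ≤ s i ω)
    (hLaplace : ∀ i, ∀ l : ℝ, 0 ≤ l →
      (∫ ω, Real.exp (-l * s i ω) ∂P) = Real.exp (-(2 : ℝ) ^ (α / 2) * l ^ (α / 2)))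
    (hpairindep : ∀ i, IndepFun (u i) (s i) P)
    (x z : EuclideanSpace ℝ (Fin d)) :
    ∀ᵐ ω ∂P, Tendsto (fun p : ℕ =>
        (1 / (p : ℝ)) * ∑ i ∈ Finset.range p,
          Real.cos (inner ℝ (Real.sqrt (s i ω) • u i ω) (x - z) : ℝ))
      atTop (nhds (Real.exp (-(Real.sqrt (quadForm M (x - z))) ^ α))) := by

  set v : EuclideanSpace ℝ (Fin d) := x - z with hvdef
  set g : (EuclideanSpace ℝ (Fin d)) × ℝ → ℝ :=
    fun p => Real.cos (Real.sqrt p.2 * (inner ℝ p.1 v : ℝ)) with hgdef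
  have hgcont : Continuous g :=
    Real.continuous_cos.comp ((Real.continuous_sqrt.comp continuous_snd).mul
      (continuous_fst.inner continuous_const))
  set X : ℕ → Ω → ℝ := fun i => g ∘ (fun ω => (u i ω, s i ω)) with hXdef
  have hXapp : ∀ i ω, X i ω = Real.cos (inner ℝ (Real.sqrt (s i ω) • u i ω) v : ℝ) := by
    intro i ω
    simp only [hXdef, Function.comp_apply, hgdef, real_inner_smul_left]
  have hXmeas : ∀ i, Measurable (X i) := fun i => hgcont.measurable.comp (hmeas i)
  have hXint : Integrable (X 0) P := by
    refine (integrable_const (1:ℝ)).mono' (hXmeas 0).aestronglyMeasurable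
      (ae_of_all _ fun ω => ?_)
    rw [Real.norm_eq_abs]
    exact Real.abs_cos_le_one _
  have hXindep : Pairwise (Function.onFun (IndepFun · · P) X) := fun i j hij =>
    (hindep.indepFun hij).comp hgcont.measurable hgcont.measurable
  have hXident : ∀ i, IdentDistrib (X i) (X 0) P P := by
    intro i
    refine ⟨(hXmeas i).aemeasurable, (hXmeas 0).aemeasurable, ?_⟩
    rw [hXdef]
    simp only
    rw [← Measure.map_map hgcont.measurable (hmeas i),
      ← Measure.map_map hgcont.measurable (hmeas 0), hiid i]
  have hmean : (∫ ω, X 0 ω ∂P) = Real.exp (-(Real.sqrt (quadForm M v)) ^ α) := by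
    have hu0 : Measurable (u 0) := (measurable_fst.comp (hmeas 0))
    have hs0m : Measurable (s 0) := (measurable_snd.comp (hmeas 0))
    exact expected_cos P hM hu0 hs0m (hulaw 0) (hs0 0) α hα.1 (hLaplace 0) (hpairindep 0) v
  have hSLLN := strong_law_ae X hXint hXindep hXident
  rw [hmean] at hSLLN
  filter_upwards [hSLLN] with ω hω
  have : (fun p : ℕ => (1 / (p : ℝ)) * ∑ i ∈ Finset.range p,
      Real.cos (inner ℝ (Real.sqrt (s i ω) • u i ω) v : ℝ))
      = fun p : ℕ => (p : ℝ)⁻¹ • ∑ i ∈ Finset.range p, X i ω := by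
    funext p
    rw [smul_eq_mul, one_div]
    congr 1
    exact Finset.sum_congr rfl fun i _ => (hXapp i ω).symm
  rw [this]
  exact hω
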